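/- Let 𝔤 be a Lie algebra over ℂ of countable dimension, let 𝔟 be a Lie ideal of 𝔤, and let 𝔞 be a Lie subalgebra of 𝔤 such that 𝔤 = 𝔞 ⊕ 𝔟 as vector spaces (so 𝔤 is the semidirect product 𝔞 ⋉ 𝔟). Let M be a simple 𝔤-module, and suppose H is a subspace of M that is invariant under the action of 𝔟, is a simple 𝔟-module under this restricted action, and carries a 𝔤-module structure whose restriction to 𝔟 coincides with the 𝔟-action inherited from M (this 𝔤-module is denoted H^𝔤). Then there exists a simple 𝔤-module U on which every element of 𝔟 acts as zero, such that M is isomorphic as a 𝔤-module to U ⊗_ℂ H^𝔤, where 𝔤 acts diagonally on the tensor product: x·(u ⊗ h) = (x·u) ⊗ h + u ⊗ (x·h). -/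

import Mathlib

/-!
The simple module `M` is spanned by the images of any nonzero vector under the associative algebra
generated by a countable basis of `𝔤`, so `M`, and with it `H`, has countable dimension. Since no
endomorphism of a space of dimension `< #ℂ` has empty spectrum, Schur's lemma upgrades to
Dixmier's: every `𝔟`-endomorphism of `H` is a scalar.

Take `U` to be the space of `𝔟`-equivariant linear maps `H → M`. As `𝔟` is an ideal, `U` is a
`𝔤`-submodule of `H →ₗ M` killed by `𝔟`, and evaluation `U ⊗ H → M` is a `𝔤`-module map. It is
onto because its image contains `ι(H) ≠ 0`. It is injective because the relations `∑ uᵢ(hᵢ) = 0`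
among linearly independent `uᵢ ∈ U` form a `𝔟`-submodule of `Hⁿ` which, if nonzero, projects
isomorphically onto a coordinate; the other coordinates are then scalars `cᵢ`, and
`∑ cᵢ uᵢ = 0` contradicts independence. Finally a nonzero `𝔤`-submodule `W` of `U` gives a
nonzero, hence full, submodule `W ⊗ H` of `U ⊗ H ≅ M`, which forces `W = U`.
-/

open TensorProduct Cardinal Polynomial

universe u

namespace Pi

variable {R L ι : Type*} {M : ι → Type*} [CommRing R] [LieRing L]
  [∀ i, AddCommGroup (M i)] [∀ i, Module R (M i)] [∀ i, LieRingModule L (M i)]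

instance lieRingModule : LieRingModule L (∀ i, M i) where
  bracket x m i := ⁅x, m i⁆
  add_lie _ _ _ := funext fun _ => add_lie _ _ _
  lie_add _ _ _ := funext fun _ => lie_add _ _ _
  leibniz_lie _ _ _ := funext fun _ => leibniz_lie _ _ _

@[simp]
theorem lie_apply (x : L) (m : ∀ i, M i) (i : ι) : ⁅x, m⁆ i = ⁅x, m i⁆ :=
  rfl

instance lieModule [LieAlgebra R L] [∀ i, LieModule R L (M i)] : LieModule R L (∀ i, M i) where
  smul_lie _ _ _ := funext fun _ => smul_lie _ _ _
  lie_smul _ _ _ := funext fun _ => lie_smul _ _ _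

variable (R L M) in
def lieModuleProj (i : ι) : (∀ i, M i) →ₗ⁅R,L⁆ M i :=
  { LinearMap.proj i with map_lie' := rfl }

end Pi

noncomputable def LieModuleEquiv.ofBijective {R L M N : Type*} [CommRing R] [LieRing L]
    [AddCommGroup M] [Module R M] [LieRingModule L M] [AddCommGroup N] [Module R N]
    [LieRingModule L N] (f : M →ₗ⁅R,L⁆ N) (hf : Function.Bijective f) : M ≃ₗ⁅R,L⁆ N :=
  { f, LinearEquiv.ofBijective (f : M →ₗ[R] N) hf with }

namespace LieModuleHom

variable {R L M N : Type*} [CommRing R] [LieRing L] [AddCommGroup M] [Module R M]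
  [LieRingModule L M] [AddCommGroup N] [Module R N] [LieRingModule L N]

theorem injective_or_eq_zero [LieModule.IsIrreducible R L M] (f : M →ₗ⁅R,L⁆ N) :
    Function.Injective f ∨ f = 0 := by
  rcases eq_bot_or_eq_top f.ker with hker | hker
  · exact Or.inl (f.ker_eq_bot.mp hker)
  · exact Or.inr (ext fun m => f.mem_ker.mp (hker ▸ LieSubmodule.mem_top m))

theorem surjective_or_eq_zero [LieModule.IsIrreducible R L N] (f : M →ₗ⁅R,L⁆ N) :
    Function.Surjective f ∨ f = 0 := by
  rcases eq_bot_or_eq_top f.range with hrange | hrange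
  · refine Or.inr (ext fun m => ?_)
    have hfm : f m ∈ f.range := (f.mem_range _).mpr ⟨m, rfl⟩
    rwa [hrange, LieSubmodule.mem_bot] at hfm
  · exact Or.inl (f.range_eq_top.mp hrange)

theorem bijective_or_eq_zero [LieModule.IsIrreducible R L M] [LieModule.IsIrreducible R L N]
    (f : M →ₗ⁅R,L⁆ N) : Function.Bijective f ∨ f = 0 :=
  f.injective_or_eq_zero.elim (fun hinj => f.surjective_or_eq_zero.imp (⟨hinj, ·⟩) _root_.id) Or.inr

def lsum {ι : Type*} [Fintype ι] {M : ι → Type*} [∀ i, AddCommGroup (M i)]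
    [∀ i, Module R (M i)] [∀ i, LieRingModule L (M i)] (u : ∀ i, M i →ₗ⁅R,L⁆ N) :
    (∀ i, M i) →ₗ⁅R,L⁆ N where
  toFun m := ∑ i, u i (m i)
  map_add' m m' := by simp [Finset.sum_add_distrib]
  map_smul' c m := by simp [Finset.smul_sum]
  map_lie' := by simp [lie_sum]

@[simp]
theorem lsum_apply {ι : Type*} [Fintype ι] {M : ι → Type*} [∀ i, AddCommGroup (M i)]
    [∀ i, Module R (M i)] [∀ i, LieRingModule L (M i)] (u : ∀ i, M i →ₗ⁅R,L⁆ N)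
    (m : ∀ i, M i) : lsum u m = ∑ i, u i (m i) :=
  rfl

end LieModuleHom

theorem spectrum.isUnit_aeval_of_eq_empty {K A : Type*} [Field K] [IsAlgClosed K] [Ring A]
    [Algebra K A] {a : A} (ha : spectrum K a = ∅) {p : K[X]} (hp : p ≠ 0) :
    IsUnit (aeval a p) := by
  rcases le_or_gt p.degree 0 with hdeg | hdeg
  · have hc : p.coeff 0 ≠ 0 := fun h => hp (by rw [eq_C_of_degree_le_zero hdeg, h, C_0])
    rw [eq_C_of_degree_le_zero hdeg, aeval_C]
    exact (IsUnit.mk0 _ hc).map _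
  · rw [← spectrum.zero_notMem_iff K, spectrum.map_polynomial_aeval_of_degree_pos a p hdeg, ha,
      Set.image_empty]
    exact Set.notMem_empty 0

namespace Module.End

theorem linearIndependent_inverse_sub_apply {K V : Type*} [Field K] [IsAlgClosed K]
    [AddCommGroup V] [Module K V] {f : Module.End K V} (hf : spectrum K f = ∅) {v : V}
    (hv : v ≠ 0) :
    LinearIndependent K fun c => Ring.inverse (algebraMap K (Module.End K V) c - f) v := by
  classical
  have hunit (c : K) : IsUnit (algebraMap K (Module.End K V) c - f) :=
    spectrum.notMem_iff.mp (hf ▸ Set.notMem_empty c)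
  refine linearIndependent_iff'.2 fun s m hm i hi => ?_
  -- Clearing denominators with `∏ j ∈ s, (j - f)` turns the relation into `q(f) v = 0`, and
  -- `q(f)` is invertible unless `q = 0`.
  let P (i : K) : K[X] := ∏ j ∈ s.erase i, (C j - X)
  have hP (i : K) (hi : i ∈ s) : aeval f (∏ j ∈ s, (C j - X)) *
      Ring.inverse (algebraMap K (Module.End K V) i - f) = aeval f (P i) := by
    rw [← Finset.prod_erase_mul _ _ hi, map_mul, mul_assoc, map_sub, aeval_C, aeval_X,
      Ring.mul_inverse_cancel _ (hunit i), mul_one]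
  let q : K[X] := ∑ i ∈ s, C (m i) * P i
  have hq : aeval f q v = 0 := by
    have := congrArg (aeval f (∏ j ∈ s, (C j - X))) hm
    rw [map_sum, map_zero] at this
    rw [← this, map_sum, LinearMap.sum_apply]
    refine Finset.sum_congr rfl fun j hj => ?_
    rw [map_smul, ← Module.End.mul_apply, hP j hj, map_mul, aeval_C, Module.End.mul_apply,
      Module.algebraMap_end_apply]
  have hq0 : q = 0 := by
    by_contra hq0
    have := (Module.End.isUnit_iff _).mp (spectrum.isUnit_aeval_of_eq_empty hf hq0)
    exact hv (this.injective (hq.trans (map_zero _).symm))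
  have := congrArg (eval i) hq0
  rw [eval_zero, eval_finsetSum, Finset.sum_eq_single i] at this
  · simpa [P, eval_prod, Finset.prod_eq_zero_iff, sub_eq_zero] using this
  · intro j hj hji
    simp [P, eval_prod, Finset.prod_eq_zero_iff, sub_eq_zero, hi, hji.symm]
  · exact fun h => absurd hi h

theorem spectrum_nonempty_of_rank_lt {K V : Type u} [Field K] [IsAlgClosed K]
    [AddCommGroup V] [Module K V] [Nontrivial V] (hV : Module.rank K V < #K)
    (f : Module.End K V) : (spectrum K f).Nonempty := by
  by_contra h
  obtain ⟨v, hv⟩ := exists_ne (0 : V)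
  exact hV.not_ge (linearIndependent_inverse_sub_apply (Set.not_nonempty_iff_eq_empty.mp h)
    hv).cardinal_le_rank

end Module.End

namespace LieModuleHom

theorem exists_apply_eq_smul_of_rank_lt {K H : Type u} {L : Type*} [Field K] [IsAlgClosed K]
    [LieRing L] [LieAlgebra K L] [AddCommGroup H] [Module K H] [LieRingModule L H]
    [LieModule K L H] [LieModule.IsIrreducible K L H] (hH : Module.rank K H < #K)
    (f : H →ₗ⁅K,L⁆ H) : ∃ c : K, ∀ h, f h = c • h := by
  have : Nontrivial H := LieModule.nontrivial_of_isIrreducible K L H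
  obtain ⟨c, hc⟩ := Module.End.spectrum_nonempty_of_rank_lt hH (f : Module.End K H)
  refine ⟨c, fun h => ?_⟩
  rcases (c • LieModuleHom.id - f).bijective_or_eq_zero with hbij | hzero
  · refine absurd ((Module.End.isUnit_iff _).mpr ?_) hc
    convert hbij using 1
    funext h
    simp [Module.algebraMap_end_apply]
  · exact (sub_eq_zero.mp (LieModuleHom.congr_fun hzero h)).symm

variable {K L H N : Type*} [Field K] [LieRing L] [AddCommGroup H] [Module K H]
  [LieRingModule L H] [AddCommGroup N] [Module K N] [LieRingModule L N]
  [LieModule.IsIrreducible K L H]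

theorem injective_lsum_of_ker_proj (hscalar : ∀ f : H →ₗ⁅K,L⁆ H, ∃ c : K, ∀ h, f h = c • h)
    {ι : Type*} [Fintype ι] {u : ι → H →ₗ⁅K,L⁆ N}
    (hu : LinearIndependent K fun i => (u i : H →ₗ[K] N)) (i₀ : ι)
    (hker : ∀ k ∈ (lsum u).ker, k i₀ = 0 → k = 0) : Function.Injective (lsum u) := by
  have : Nontrivial H := LieModule.nontrivial_of_isIrreducible K L H
  rw [← ker_eq_bot]
  by_contra hS
  set S := (lsum u).ker
  let π : S →ₗ⁅K,L⁆ H := (Pi.lieModuleProj K L _ i₀).comp S.incl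
  have hπ_inj : Function.Injective π := fun k k' hkk' =>
    Subtype.ext (sub_eq_zero.mp (hker _ (sub_mem k.2 k'.2) (sub_eq_zero.mpr hkk')))
  have hπ_surj : Function.Surjective π := π.surjective_or_eq_zero.resolve_right fun hπ => hS <|
    (LieSubmodule.eq_bot_iff S).mpr fun k hk => hker k hk (LieModuleHom.congr_fun hπ ⟨k, hk⟩)
  let e := LieModuleEquiv.ofBijective π ⟨hπ_inj, hπ_surj⟩
  choose c hc using fun j =>
    hscalar ((Pi.lieModuleProj K L _ j).comp (S.incl.comp (e.symm : H →ₗ⁅K,L⁆ S)))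
  have hsum : ∑ j, c j • (u j : H →ₗ[K] N) = 0 := by
    ext h
    have hcoord (j : ι) : (e.symm h : ι → H) j = c j • h := hc j h
    simpa [hcoord] using LieModuleHom.mem_ker.mp (e.symm h).2
  have hc₀ : c i₀ = 0 := linearIndependent_iff'.mp hu Finset.univ c hsum i₀ (Finset.mem_univ _)
  obtain ⟨h, hh⟩ := exists_ne (0 : H)
  have h_eq : h = c i₀ • h := (e.apply_symm_apply h).symm.trans (hc i₀ h)
  rw [hc₀, zero_smul] at h_eq
  exact hh h_eq

theorem injective_lsum_of_linearIndependent
    (hscalar : ∀ f : H →ₗ⁅K,L⁆ H, ∃ c : K, ∀ h, f h = c • h) {ι : Type*} [Fintype ι]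
    {u : ι → H →ₗ⁅K,L⁆ N} (hu : LinearIndependent K fun i => (u i : H →ₗ[K] N)) :
    Function.Injective (lsum u) := by
  classical
  induction hn : Fintype.card ι generalizing ι with
  | zero =>
    have : IsEmpty ι := Fintype.card_eq_zero_iff.mp hn
    exact Function.injective_of_subsingleton _
  | succ n ih =>
    obtain ⟨i₀⟩ : Nonempty ι := Fintype.card_pos_iff.mp (hn ▸ n.succ_pos)
    refine injective_lsum_of_ker_proj hscalar hu i₀ fun k hk hk₀ => ?_
    have hrest := ih (hu.comp (Subtype.val : {i // i ≠ i₀} → ι) Subtype.val_injective)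
      (by simp [Fintype.card_subtype_compl, hn])
    have hk' : (fun i : {i // i ≠ i₀} => k i) = 0 := hrest <| by
      simpa [Fintype.sum_eq_add_sum_subtype_ne _ i₀, hk₀] using hk
    funext i
    by_cases hi : i = i₀
    · rw [hi, hk₀]
      rfl
    · exact congrFun hk' ⟨i, hi⟩

theorem injective_lift_subtype_of_forall_map_lie
    (hscalar : ∀ f : H →ₗ⁅K,L⁆ H, ∃ c : K, ∀ h, f h = c • h) (V : Submodule K (H →ₗ[K] N))
    (hV : ∀ f ∈ V, ∀ (x : L) (h : H), f ⁅x, h⁆ = ⁅x, f h⁆) :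
    Function.Injective (lift V.subtype) := by
  classical
  let e := Module.Basis.ofVectorSpace K V
  let u (i) : H →ₗ⁅K,L⁆ N := { (e i : H →ₗ[K] N) with map_lie' := hV _ (e i).2 _ _ }
  rw [injective_iff_map_eq_zero]
  intro t ht
  obtain ⟨f, rfl⟩ := (equivFinsuppOfBasisLeft e).symm.surjective t
  have hu : LinearIndependent K fun i : f.support => (u i : H →ₗ[K] N) :=
    (e.linearIndependent.map' V.subtype V.ker_subtype).comp _ Subtype.val_injective
  have hf : (fun i : f.support => f i) = 0 := injective_lsum_of_linearIndependent hscalar hu <| by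
    simpa [equivFinsuppOfBasisLeft_symm_apply, Finsupp.sum, u,
      Finset.sum_attach f.support fun i => (e i : H →ₗ[K] N) (f i)] using ht
  suffices f = 0 by simp [this]
  ext i
  by_cases hi : i ∈ f.support
  · exact congrFun hf ⟨i, hi⟩
  · exact Finsupp.notMem_support_iff.mp hi

end LieModuleHom

theorem LieModule.isIrreducible_of_isIrreducible_tensor {K L U H : Type*} [Field K] [LieRing L]
    [LieAlgebra K L] [AddCommGroup U] [Module K U] [LieRingModule L U] [LieModule K L U]
    [AddCommGroup H] [Module K H] [LieRingModule L H] [LieModule K L H] [Nontrivial H]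
    [IsIrreducible K L (U ⊗[K] H)] : IsIrreducible K L U := by
  obtain ⟨h₀, hh₀⟩ := exists_ne (0 : H)
  obtain ⟨φ, hφ⟩ : ∃ φ : Module.Dual K H, φ h₀ ≠ 0 := by
    by_contra! h
    exact hh₀ ((Module.forall_dual_apply_eq_zero_iff K h₀).mp h)
  let Φ : U ⊗[K] H →ₗ[K] U := (TensorProduct.rid K U).toLinearMap ∘ₗ φ.lTensor U
  have hΦ (u : U) (h : H) : Φ (u ⊗ₜ h) = φ h • u := by simp [Φ]
  have : Nontrivial U := by
    have := nontrivial_of_isIrreducible K L (U ⊗[K] H)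
    by_contra hU
    rw [not_nontrivial_iff_subsingleton] at hU
    exact not_subsingleton (U ⊗[K] H) inferInstance
  refine IsIrreducible.mk fun W hW => ?_
  let ρ := TensorProduct.LieModule.map W.incl (LieModuleHom.id : H →ₗ⁅K,L⁆ H)
  have hρW (t : W ⊗[K] H) : Φ (ρ t) ∈ W := by
    induction t using TensorProduct.induction_on with
    | zero => simp
    | tmul w h => simpa [ρ, hΦ] using W.smul_mem (φ h) w.2
    | add t t' ht ht' => simpa using W.add_mem ht ht'
  have hρ : Function.Surjective ρ := ρ.surjective_or_eq_zero.resolve_right fun hρ => hW <| by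
    refine (LieSubmodule.eq_bot_iff W).mpr fun w hw => ?_
    simpa [ρ, hΦ, hφ] using congrArg Φ (LieModuleHom.congr_fun hρ (⟨w, hw⟩ ⊗ₜ h₀))
  refine eq_top_iff.mpr fun u _ => ?_
  obtain ⟨t, ht⟩ := hρ (u ⊗ₜ h₀)
  have hu := hρW t
  rw [ht, hΦ] at hu
  exact (W.smul_mem_iff hφ).mp hu

theorem Submonoid.countable_closure {M : Type*} [Monoid M] {s : Set M} (hs : s.Countable) :
    (Submonoid.closure s : Set M).Countable := by
  have := hs.to_subtype
  rw [Submonoid.closure_eq_mrange, MonoidHom.coe_mrange]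
  exact Set.countable_range _

theorem LieModule.rank_le_aleph0_of_isIrreducible {K L M : Type*} [Field K] [LieRing L]
    [LieAlgebra K L] [AddCommGroup M] [Module K M] [LieRingModule L M] [LieModule K L M]
    [IsIrreducible K L M] (hL : Module.rank K L ≤ ℵ₀) : Module.rank K M ≤ ℵ₀ := by
  have : Nontrivial M := nontrivial_of_isIrreducible K L M
  obtain ⟨m, hm⟩ := exists_ne (0 : M)
  let B := Module.Basis.ofVectorSpace K L
  have : Countable (Module.Basis.ofVectorSpaceIndex K L) :=
    mk_le_aleph0_iff.mp (B.mk_eq_rank'' ▸ hL)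
  let A := Algebra.adjoin K (Set.range (toEnd K L M ∘ B))
  have hA (x : L) : toEnd K L M x ∈ A := by
    have hx : x ∈ Submodule.span K (Set.range B) := B.span_eq ▸ Submodule.mem_top
    have := Submodule.mem_map_of_mem (f := (toEnd K L M : L →ₗ[K] Module.End K M)) hx
    rw [Submodule.map_span, ← Set.range_comp] at this
    exact Algebra.span_le_adjoin K _ this
  let N : LieSubmodule K L M :=
    { (Subalgebra.toSubmodule A).map (LinearMap.applyₗ m) with
      lie_mem := by
        rintro x _ ⟨a, ha, rfl⟩
        exact ⟨toEnd K L M x * a, A.mul_mem (hA x) ha, rfl⟩ }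
  have hN : N = ⊤ := (eq_bot_or_eq_top N).resolve_left fun hbot => hm <| by
    have hmN : m ∈ N := ⟨1, A.one_mem, rfl⟩
    rwa [hbot, LieSubmodule.mem_bot] at hmN
  calc Module.rank K M = Module.rank K N := by rw [hN]; exact (rank_top K M).symm
    _ ≤ Module.rank K (Subalgebra.toSubmodule A) := rank_map_le _ _
    _ ≤ ℵ₀ := by
      rw [Algebra.adjoin_eq_span]
      exact (rank_span_le _).trans (mk_le_aleph0_iff.mpr
        (Submonoid.countable_closure (Set.countable_range _)).to_subtype)

namespace LieSubalgebra

variable {R L : Type*} [CommRing R] [LieRing L] [LieAlgebra R L]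

def invariants (b : LieSubalgebra R L) (hb : ∀ x : L, ∀ y ∈ b, ⁅x, y⁆ ∈ b) (M : Type*)
    [AddCommGroup M] [Module R M] [LieRingModule L M] [LieModule R L M] : LieSubmodule R L M where
  carrier := {m | ∀ y ∈ b, ⁅y, m⁆ = 0}
  add_mem' hm hm' y hy := by rw [lie_add, hm y hy, hm' y hy, add_zero]
  zero_mem' y _ := lie_zero y
  smul_mem' c m hm y hy := by rw [lie_smul, hm y hy, smul_zero]
  lie_mem {x m} hm y hy := by
    rw [leibniz_lie, hm y hy, lie_zero, add_zero, ← lie_skew, neg_lie,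
      hm _ (hb x y hy), neg_zero]

theorem mem_invariants_linearMap_iff (b : LieSubalgebra R L) (hb : ∀ x : L, ∀ y ∈ b, ⁅x, y⁆ ∈ b)
    {M N : Type*} [AddCommGroup M] [Module R M] [LieRingModule L M] [LieModule R L M]
    [AddCommGroup N] [Module R N] [LieRingModule L N] [LieModule R L N] (f : M →ₗ[R] N) :
    f ∈ invariants b hb (M →ₗ[R] N) ↔ ∀ y ∈ b, ∀ m, f ⁅y, m⁆ = ⁅y, f m⁆ := by
  refine forall₂_congr fun y _ => ?_
  simp only [LinearMap.ext_iff, LieHom.lie_apply, LinearMap.zero_apply, sub_eq_zero]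
  exact forall_congr' fun m => eq_comm

end LieSubalgebra

theorem simple_module_semidirect_product_tensor_general
    (g : Type) [LieRing g] [LieAlgebra ℂ g]
    (hcount : Module.rank ℂ g ≤ ℵ₀)
    (b : LieSubalgebra ℂ g)
    (hideal : ∀ x : g, ∀ y ∈ b, ⁅x, y⁆ ∈ b)
    (M : Type) [AddCommGroup M] [Module ℂ M] [LieRingModule g M] [LieModule ℂ g M]
    (hM : LieModule.IsIrreducible ℂ g M)
    (H : Type) [AddCommGroup H] [Module ℂ H] [LieRingModule g H] [LieModule ℂ g H]
    (ι : H →ₗ[ℂ] M) (hι : Function.Injective ι)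
    (hequiv : ∀ x ∈ b, ∀ h : H, ι ⁅x, h⁆ = ⁅x, ι h⁆)
    (hH : LieModule.IsIrreducible ℂ b H) :
    ∃ (U : Type) (_ : AddCommGroup U) (_ : Module ℂ U) (_ : LieRingModule g U)
      (_ : LieModule ℂ g U),
      LieModule.IsIrreducible ℂ g U ∧
      (∀ x ∈ b, ∀ u : U, ⁅x, u⁆ = 0) ∧
      Nonempty (M ≃ₗ⁅ℂ,g⁆ (U ⊗[ℂ] H)) := by
  have : Nontrivial H := LieModule.nontrivial_of_isIrreducible ℂ b H
  have hrankH : Module.rank ℂ H < #ℂ := calc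
    Module.rank ℂ H ≤ Module.rank ℂ M := LinearMap.rank_le_of_injective ι hι
    _ ≤ ℵ₀ := LieModule.rank_le_aleph0_of_isIrreducible hcount
    _ < #ℂ := mk_complex ▸ aleph0_lt_continuum
  let U := b.invariants hideal (H →ₗ[ℂ] M)
  have hιU : ι ∈ U := (b.mem_invariants_linearMap_iff hideal ι).mpr hequiv
  let ev : U ⊗[ℂ] H →ₗ⁅ℂ,g⁆ M := TensorProduct.LieModule.liftLie ℂ g U H M U.incl
  have hinj : Function.Injective ev :=
    LieModuleHom.injective_lift_subtype_of_forall_map_lie (L := b)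
      (LieModuleHom.exists_apply_eq_smul_of_rank_lt hrankH) U.toSubmodule
      fun f hf x h => (b.mem_invariants_linearMap_iff hideal f).mp hf x x.2 h
  have hsurj : Function.Surjective ev := ev.surjective_or_eq_zero.resolve_right fun hev => by
    obtain ⟨h, hh⟩ := exists_ne (0 : H)
    exact hh (hι ((LieModuleHom.congr_fun hev (⟨ι, hιU⟩ ⊗ₜ h)).trans (map_zero ι).symm))
  let e := LieModuleEquiv.ofBijective ev ⟨hinj, hsurj⟩
  have : LieModule.IsIrreducible ℂ g (U ⊗[ℂ] H) :=
    (LieSubmodule.orderIsoMapComap e).isSimpleOrder_iff.mpr hM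
  exact ⟨U, _, _, _, _, LieModule.isIrreducible_of_isIrreducible_tensor (H := H),
    fun x hx u => Subtype.ext (u.2 x hx), ⟨e.symm⟩⟩

/-- Let `𝔤` be a countable-dimensional Lie algebra over `ℂ`, `𝔟` an ideal of `𝔤`
(formalized as a Lie subalgebra `b` satisfying the ideal condition), and `𝔞` a Lie subalgebra with
`𝔤 = 𝔞 ⊕ 𝔟` as vector spaces. Let `M` be a simple `𝔤`-module and `H` a `𝔤`-module (the module
`H^𝔤`) together with an injective linear embedding `ι : H →ₗ[ℂ] M` which is `𝔟`-equivariant (so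
that the image of `H` is a `𝔟`-invariant subspace of `M`, whose inherited `𝔟`-action coincides
with the restriction to `𝔟` of the `𝔤`-action on `H`), and suppose `H` is a simple `𝔟`-module.
Then there exists a simple `𝔤`-module `U` on which every element of `𝔟` acts as zero, such that
`M ≅ U ⊗[ℂ] H` as `𝔤`-modules, with the diagonal action `x·(u ⊗ h) = (x·u) ⊗ h + u ⊗ (x·h)`. -/
theorem simple_module_semidirect_product_tensor
    (g : Type) [LieRing g] [LieAlgebra ℂ g]
    (hcount : Module.rank ℂ g ≤ ℵ₀)
    (a b : LieSubalgebra ℂ g)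
    (hideal : ∀ x : g, ∀ y ∈ b, ⁅x, y⁆ ∈ b)
    (hcompl : IsCompl a.toSubmodule b.toSubmodule)
    (M : Type) [AddCommGroup M] [Module ℂ M] [LieRingModule g M] [LieModule ℂ g M]
    (hM : LieModule.IsIrreducible ℂ g M)
    (H : Type) [AddCommGroup H] [Module ℂ H] [LieRingModule g H] [LieModule ℂ g H]
    (ι : H →ₗ[ℂ] M) (hι : Function.Injective ι)
    (hequiv : ∀ x ∈ b, ∀ h : H, ι ⁅x, h⁆ = ⁅x, ι h⁆)
    (hH : LieModule.IsIrreducible ℂ b H) :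
    ∃ (U : Type) (_ : AddCommGroup U) (_ : Module ℂ U) (_ : LieRingModule g U)
      (_ : LieModule ℂ g U),
      LieModule.IsIrreducible ℂ g U ∧
      (∀ x ∈ b, ∀ u : U, ⁅x, u⁆ = 0) ∧
      Nonempty (M ≃ₗ⁅ℂ,g⁆ (U ⊗[ℂ] H)) :=
  simple_module_semidirect_product_tensor_general g hcount b hideal M hM H ι hι hequiv hH
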